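/- The function d ↦ 1/√((h_t−h_r)² + d²) − 1/√((h_t+h_r)² + d²) is strictly decreasing in d on (0, ∞), for fixed h_t ≠ h_r, both positive. -/

import Mathlib

open Real Set

lemma one_div_sqrt_sub_one_div_sqrt {a b : ℝ} (ha : 0 < a) (hb : 0 < b) :
    1 / √a - 1 / √b = (b - a) / (√a * √b * (√a + √b)) := by
  have hsa : 0 < √a := sqrt_pos.mpr ha
  have hsb : 0 < √b := sqrt_pos.mpr hb
  field_simp
  linear_combination sq_sqrt hb.le - sq_sqrt ha.le

/-- After rationalizing, the numerator `B - A` is constant while the denominator increases. -/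
lemma strictAntiOn_one_div_sqrt_add_sub_one_div_sqrt_add {A B : ℝ} (hAB : A < B) :
    StrictAntiOn (fun u : ℝ => 1 / √(A + u) - 1 / √(B + u)) (Ioi (-A)) := by
  intro u hu v hv huv
  rw [mem_Ioi, neg_lt_iff_pos_add'] at hu hv
  have hBu : 0 < B + u := by linarith
  have hBv : 0 < B + v := by linarith
  dsimp only
  rw [one_div_sqrt_sub_one_div_sqrt hu hBu, one_div_sqrt_sub_one_div_sqrt hv hBv,
    add_sub_add_right_eq_sub, add_sub_add_right_eq_sub]
  gcongr

theorem stmt_4_general (ht hr : ℝ) (hht : 0 < ht) (hhr : 0 < hr) :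
    StrictAntiOn (fun d : ℝ =>
      1 / Real.sqrt ((ht - hr)^2 + d^2) - 1 / Real.sqrt ((ht + hr)^2 + d^2))
      (Set.Ioi 0) := by
  have hAB : (ht - hr) ^ 2 < (ht + hr) ^ 2 := by nlinarith [mul_pos hht hhr]
  have hsq : StrictMonoOn (fun d : ℝ => d ^ 2) (Ioi 0) :=
    (pow_left_strictMonoOn₀ two_ne_zero).mono fun _ hd => le_of_lt (α := ℝ) hd
  refine (strictAntiOn_one_div_sqrt_add_sub_one_div_sqrt_add hAB).comp_strictMonoOn hsq ?_
  intro d hd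
  have hd2 : 0 < d ^ 2 := pow_pos hd 2
  simp only [mem_Ioi]
  linarith [sq_nonneg (ht - hr)]

theorem stmt_4 (ht hr : ℝ) (hht : 0 < ht) (hhr : 0 < hr) (hne : ht ≠ hr) :
    StrictAntiOn (fun d : ℝ =>
      1 / Real.sqrt ((ht - hr)^2 + d^2) - 1 / Real.sqrt ((ht + hr)^2 + d^2))
      (Set.Ioi 0) :=
  stmt_4_general ht hr hht hhr
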